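/- arXiv:2504.20240 — 2 statements merged into one kernel-verified Lean document; each statement's English description precedes it below -/
import Mathlib

section
/- Let τ > 1 and let D(a,r) be a non-empty open disc in ℂ with center a and radius r > 0 such that D(a,r) ⊂ ℂ∖{0}. If every polynomial φ can be uniformly approximated on the closed disc \overline{D(a,r)} by polynomials of the form ∑_{k=⌊n/τ⌋}^{n} a_k z^k (i.e. for every polynomial φ and ε > 0 there exist n and such a polynomial P with sup_{z∈\overline{D(a,r)}}|P(z) − φ(z)| ≤ ε), then r ≤ |a|·(τ−1)/(τ+1). -/
open Polynomial Finset

namespace Stmt16Aux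


lemma re_multiset_sum (W : Multiset ℂ) : W.sum.re = (W.map Complex.re).sum := by
  induction W using Multiset.induction_on with
  | empty => simp
  | cons w W ih => simp [ih]

lemma logderiv_eval (e : ℂ) (W : Multiset ℂ) (x : ℂ) (hx : ∀ w ∈ W, x ≠ w) :
    (Polynomial.derivative (Polynomial.C e *
        (W.map fun w => Polynomial.X - Polynomial.C w).prod)).eval x
      = ((Polynomial.C e * (W.map fun w => Polynomial.X - Polynomial.C w).prod).eval x)
        * (W.map fun w => (x - w)⁻¹).sum := by
  induction W using Multiset.induction_on with
  | empty => simp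
  | cons w W ih =>
    have hxw : x ≠ w := hx w (Multiset.mem_cons_self _ _)
    have hx' : ∀ v ∈ W, x ≠ v := fun v hv => hx v (Multiset.mem_cons_of_mem hv)
    have h1 : (x - w) * (x - w)⁻¹ = 1 := mul_inv_cancel₀ (sub_ne_zero.mpr hxw)
    simp only [Multiset.map_cons, Multiset.prod_cons, Multiset.sum_cons]
    rw [mul_left_comm, Polynomial.derivative_mul]
    simp only [Polynomial.derivative_sub, Polynomial.derivative_X, Polynomial.derivative_C,
      sub_zero, one_mul, Polynomial.eval_add, Polynomial.eval_mul, Polynomial.eval_sub,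
      Polynomial.eval_X, Polynomial.eval_C]
    rw [ih hx']
    simp only [Polynomial.eval_mul, Polynomial.eval_C]
    linear_combination (-(e * ((W.map fun w => Polynomial.X - Polynomial.C w).prod).eval x)) * h1



lemma taylor_coeff_bound (Q : Polynomial ℂ) (M k : ℕ) (hk : k ≤ M) (hdeg : Q.natDegree ≤ M)
    (x₀ : ℂ) (s B : ℝ) (hs : 0 < s)
    (hB : ∀ z : ℂ, ‖z - x₀‖ = s → ‖Q.eval z‖ ≤ B) :
    ‖((Polynomial.taylor x₀) Q).coeff k‖ * s ^ k ≤ B := by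
  set N := M + 1 with hN
  have hNpos : 0 < N := Nat.succ_pos M
  have hNC : (N : ℂ) ≠ 0 := Nat.cast_ne_zero.mpr hNpos.ne'
  set ω : ℂ := Complex.exp ((2 * Real.pi * Complex.I) / N) with hω
  have hωpow : ∀ t : ℕ, ω ^ t = Complex.exp ((t : ℂ) * ((2 * Real.pi * Complex.I) / N)) := by
    intro t; rw [hω, ← Complex.exp_nat_mul]
  have hωN : ω ^ N = 1 := by
    rw [hωpow]
    have : (N : ℂ) * ((2 * Real.pi * Complex.I) / N) = 2 * Real.pi * Complex.I := by
      field_simp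
    rw [this, Complex.exp_two_pi_mul_I]
  have hωne : ∀ t : ℕ, 0 < t → t < N → ω ^ t ≠ 1 := by
    intro t ht htN h
    rw [hωpow, Complex.exp_eq_one_iff] at h
    obtain ⟨j, hj⟩ := h
    have h2 : (2 * (Real.pi : ℂ) * Complex.I) ≠ 0 := Complex.two_pi_I_ne_zero
    have hj2 : (t:ℂ) * (2*Real.pi*Complex.I) = ((j:ℂ) * N) * (2*Real.pi*Complex.I) := by
      have h3 := congrArg (fun z => z * (N:ℂ)) hj
      field_simp at h3
      linear_combination (2*Real.pi*Complex.I) * h3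
    have hteq : (t : ℂ) = (j:ℂ) * N := mul_right_cancel₀ h2 hj2
    have hzz : (t : ℤ) = j * (N : ℤ) := by exact_mod_cast hteq
    have ht' : (0 : ℤ) < t := by exact_mod_cast ht
    have htN' : (t : ℤ) < N := by exact_mod_cast htN
    rcases le_or_gt j 0 with hj0 | hj0
    · nlinarith [hzz, ht', (by exact_mod_cast hNpos : (0:ℤ) < (N:ℤ))]
    · nlinarith [hzz, htN', (by exact_mod_cast hNpos : (0:ℤ) < (N:ℤ))]
  have habsω : ‖ω‖ = 1 := by
    have : (2 * Real.pi * Complex.I) / N = ((2 * Real.pi / N : ℝ) : ℂ) * Complex.I := by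
      push_cast; ring
    rw [hω, this, Complex.norm_exp_ofReal_mul_I]
  set T := (Polynomial.taylor x₀) Q with hT
  have hTdeg : T.natDegree < N := by
    rw [hT, Polynomial.natDegree_taylor]; omega
  have heval : ∀ y : ℂ, Q.eval (x₀ + y) = ∑ i ∈ Finset.range N, T.coeff i * y ^ i := by
    intro y
    have h1 : Q.eval (x₀ + y) = T.eval y := by
      rw [hT, Polynomial.taylor_eval, add_comm]
    rw [h1, Polynomial.eval_eq_sum_range' hTdeg]
  have key : ∑ j ∈ Finset.range N, ω ^ (j * (N - k)) * Q.eval (x₀ + (s : ℂ) * ω ^ j)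
      = (N : ℂ) * (T.coeff k * (s : ℂ) ^ k) := by
    have step1 : ∀ j ∈ Finset.range N, ω ^ (j * (N - k)) * Q.eval (x₀ + (s : ℂ) * ω ^ j)
        = ∑ i ∈ Finset.range N, T.coeff i * (s:ℂ) ^ i * (ω ^ (N - k + i)) ^ j := by
      intro j _
      rw [heval, Finset.mul_sum]
      refine Finset.sum_congr rfl fun i _ => ?_
      rw [mul_pow, ← pow_mul, ← pow_mul,
        show (N - k + i) * j = j * (N - k) + j * i from by ring, pow_add]
      ring
    rw [Finset.sum_congr rfl step1, Finset.sum_comm]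
    have inner : ∀ i ∈ Finset.range N,
        ∑ j ∈ Finset.range N, T.coeff i * (s:ℂ) ^ i * (ω ^ (N - k + i)) ^ j
        = if i = k then (N:ℂ) * (T.coeff k * (s:ℂ)^k) else 0 := by
      intro i hi
      rw [← Finset.mul_sum]
      by_cases hik : i = k
      · subst hik
        have : N - i + i = N := by omega
        rw [this, hωN]
        simp [if_pos]
        ring
      · rw [if_neg hik]
        have ht0 : 0 < N - k + i := by omega
        have hne : ω ^ (N - k + i) ≠ 1 := by
          rcases lt_or_ge (N - k + i) N with h | h
          · exact hωne _ ht0 h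
          · have hlt : N - k + i - N < N := by
              have := Finset.mem_range.mp hi; omega
            have hgt : 0 < N - k + i - N := by
              have := Finset.mem_range.mp hi
              rcases Nat.lt_or_ge (N - k + i) N with h' | h'
              · omega
              · rcases Nat.eq_or_lt_of_le h' with h'' | h''
                · exfalso; omega
                · omega
            have : ω ^ (N - k + i) = ω ^ (N - k + i - N) * ω ^ N := by
              rw [← pow_add]; congr 1; omega
            rw [this, hωN, mul_one]
            exact hωne _ hgt hlt
        have hg : ∑ j ∈ Finset.range N, (ω ^ (N - k + i)) ^ j
            = ((ω ^ (N - k + i)) ^ N - 1) / (ω ^ (N - k + i) - 1) := geom_sum_eq hne N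
        have hnum : (ω ^ (N - k + i)) ^ N = 1 := by
          rw [← pow_mul, mul_comm, pow_mul, hωN, one_pow]
        rw [hg, hnum, sub_self, zero_div, mul_zero]
    rw [Finset.sum_congr rfl inner, Finset.sum_ite_eq' (Finset.range N) k
      (fun _ => (N:ℂ) * (T.coeff k * (s:ℂ)^k))]
    rw [if_pos (Finset.mem_range.mpr (by omega))]
  have hbound : ‖(N : ℂ) * (T.coeff k * (s : ℂ) ^ k)‖ ≤ N * B := by
    rw [← key]
    calc ‖∑ j ∈ Finset.range N, ω ^ (j * (N - k)) * Q.eval (x₀ + (s:ℂ) * ω ^ j)‖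
        ≤ ∑ j ∈ Finset.range N, ‖ω ^ (j * (N - k)) * Q.eval (x₀ + (s:ℂ) * ω ^ j)‖ := by
          exact norm_sum_le _ _
      _ ≤ ∑ j ∈ Finset.range N, B := by
          refine Finset.sum_le_sum fun j _ => ?_
          rw [norm_mul, norm_pow, habsω, one_pow, one_mul]
          refine hB _ ?_
          rw [add_sub_cancel_left, norm_mul, norm_pow, habsω, one_pow, mul_one,
            Complex.norm_real, Real.norm_eq_abs, abs_of_pos hs]
      _ = N * B := by rw [Finset.sum_const, Finset.card_range, nsmul_eq_mul]
  have hfin : (N : ℝ) * (‖T.coeff k‖ * s ^ k) ≤ (N:ℝ) * B := by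
    calc (N : ℝ) * (‖T.coeff k‖ * s ^ k)
        = ‖(N : ℂ) * (T.coeff k * (s : ℂ) ^ k)‖ := by
          rw [norm_mul, norm_mul, norm_pow, Complex.norm_natCast, Complex.norm_real, Real.norm_eq_abs,
            abs_of_pos hs]
      _ ≤ N * B := hbound
  have hNR : (0:ℝ) < N := by exact_mod_cast hNpos
  exact le_of_mul_le_mul_left hfin hNR



lemma root_re_bound (u y : ℂ) (r β : ℝ) (hr : 0 < r) (hβ0 : 0 ≤ β) (hβ1 : β < 1)
    (hu : Complex.normSq u = 1) (hy : r ≤ ‖y‖) :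
    ((-2 * (r : ℂ)) * u * (-(((β * r : ℝ) : ℂ) * u + y))⁻¹).re ≤ 2 / (1 + β) := by
  set D : ℂ := -(((β * r : ℝ) : ℂ) * u + y) with hD
  set p : ℝ := (u * (starRingEnd ℂ) y).re with hp
  set q : ℝ := Complex.normSq y with hq
  have habsy : ‖y‖ = Real.sqrt q := by rw [hq, Complex.norm_def]
  have hqr : r ^ 2 ≤ q := by
    have := Complex.sq_norm y
    nlinarith [norm_nonneg y]
  have hp2 : p ^ 2 ≤ q := by
    have h1 : p ^ 2 ≤ Complex.normSq (u * (starRingEnd ℂ) y) := by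
      rw [Complex.normSq_apply]
      nlinarith [sq_nonneg (u * (starRingEnd ℂ) y).im]
    rw [Complex.normSq_mul, Complex.normSq_conj, hu, one_mul] at h1
    exact h1
  have habsu : ‖u‖ = 1 := by
    have := Complex.sq_norm u
    nlinarith [norm_nonneg u]
  -- D ≠ 0
  have hDabs : (1 - β) * r ≤ ‖D‖ := by
    have h1 : ‖D‖ = ‖((β * r : ℝ) : ℂ) * u + y‖ := by
      rw [hD, norm_neg]
    have h2 : ‖y‖ ≤ ‖((β * r : ℝ) : ℂ) * u + y‖ + β * r := by
      calc ‖y‖ = ‖(((β * r : ℝ) : ℂ) * u + y) + (-(((β * r : ℝ) : ℂ) * u))‖ := by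
            congr 1; ring
        _ ≤ ‖((β * r : ℝ) : ℂ) * u + y‖ + ‖-(((β * r : ℝ) : ℂ) * u)‖ :=
            norm_add_le _ _
        _ = ‖((β * r : ℝ) : ℂ) * u + y‖ + ‖((β * r : ℝ) : ℂ) * u‖ := by
            rw [norm_neg]
        _ = ‖((β * r : ℝ) : ℂ) * u + y‖ + β * r := by
            rw [norm_mul, habsu, mul_one, Complex.norm_real, Real.norm_eq_abs, abs_of_nonneg (by positivity)]
    rw [h1]; linarith
  have hDne : D ≠ 0 := by
    intro h
    rw [h, norm_zero] at hDabs
    nlinarith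
  have hnsD : Complex.normSq D = β ^ 2 * r ^ 2 + q + 2 * (β * r) * p := by
    rw [hD, Complex.normSq_neg, Complex.normSq_add, Complex.normSq_mul,
      Complex.normSq_ofReal, hu, mul_one]
    have : (((β * r : ℝ) : ℂ) * u * (starRingEnd ℂ) y).re = β * r * p := by
      rw [hp, mul_assoc, Complex.re_ofReal_mul]
    rw [this, hq]
    ring
  have hnsDpos : 0 < Complex.normSq D := Complex.normSq_pos.mpr hDne
  have hcu : u * (starRingEnd ℂ) u = 1 := by
    rw [Complex.mul_conj, hu, Complex.ofReal_one]
  have hnum : ((-2 * (r : ℂ)) * u * (starRingEnd ℂ) D).re = 2 * r * (β * r + p) := by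
    have h1 : (-2 * (r : ℂ)) * u * (starRingEnd ℂ) D
        = ((2 * r : ℝ) : ℂ) * (((β * r : ℝ) : ℂ) + u * (starRingEnd ℂ) y) := by
      rw [hD]
      simp only [map_neg, map_add, map_mul, Complex.conj_ofReal]
      have : (-2 * (r:ℂ)) * u * -(((β * r : ℝ):ℂ) * (starRingEnd ℂ) u + (starRingEnd ℂ) y)
          = ((2*r:ℝ):ℂ) * (((β * r : ℝ):ℂ) * (u * (starRingEnd ℂ) u) + u * (starRingEnd ℂ) y) := by
        push_cast; ring
      rw [this, hcu, mul_one]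
    rw [h1, Complex.re_ofReal_mul, Complex.add_re, Complex.ofReal_re, hp]
  have hrei : ((-2 * (r : ℂ)) * u * D⁻¹).re = (2 * r * (β * r + p)) / Complex.normSq D := by
    rw [Complex.inv_def]
    rw [show (-2 * (r : ℂ)) * u * ((starRingEnd ℂ) D * (((Complex.normSq D)⁻¹ : ℝ) : ℂ))
        = (((Complex.normSq D)⁻¹ : ℝ) : ℂ) * ((-2 * (r : ℂ)) * u * (starRingEnd ℂ) D) from by
      ring]
    rw [Complex.re_ofReal_mul, hnum, div_eq_mul_inv]
    ring
  rw [hrei]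
  rw [div_le_div_iff₀ hnsDpos (by linarith : (0:ℝ) < 1 + β)]
  rw [hnsD]
  have hfact1 : 0 ≤ (1 - β) * (q - p ^ 2) := by nlinarith
  have hfact2 : 0 ≤ (1 - β) * (q - r ^ 2) := by nlinarith
  have hfact3 : 0 ≤ β * (q - r ^ 2) := by nlinarith
  have hfact4 : 0 ≤ (1 - β) * (p - r) ^ 2 := mul_nonneg (by linarith) (sq_nonneg _)
  nlinarith [hfact1, hfact2, hfact3, hfact4]



set_option maxHeartbeats 2000000 in
theorem main (τ : ℝ) (hτ : 1 < τ) (a : ℂ) (r : ℝ) (hr : 0 < r)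
    (h0 : (0 : ℂ) ∉ Metric.ball a r)
    (happrox : ∀ φ : Polynomial ℂ, ∀ ε : ℝ, 0 < ε →
      ∃ n : ℕ, ∃ P : Polynomial ℂ, P.natDegree ≤ n ∧
        (∀ k : ℕ, k < ⌊(n : ℝ) / τ⌋₊ → P.coeff k = 0) ∧
        ∀ z ∈ Metric.closedBall a r, ‖P.eval z - φ.eval z‖ ≤ ε) :
    r ≤ ‖a‖ * (τ - 1) / (τ + 1) := by
  classical
  by_contra hcon
  push_neg at hcon
  set α : ℝ := ‖a‖ with hα_def
  have hτp : (0:ℝ) < τ := by linarith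
  have hτ1 : (0:ℝ) < τ - 1 := by linarith
  have hτ11 : (0:ℝ) < τ + 1 := by linarith
  have hαr : r ≤ α := by
    have h1 : ¬ dist (0:ℂ) a < r := fun h => h0 (Metric.mem_ball.mpr h)
    have h2 : dist (0:ℂ) a = α := by
      rw [Complex.dist_eq, zero_sub, norm_neg, hα_def]
    rw [h2] at h1
    linarith [not_lt.mp h1]
  have hαpos : (0:ℝ) < α := lt_of_lt_of_le hr hαr
  have hcon' : α * (τ - 1) < r * (τ + 1) := by
    rw [div_lt_iff₀ hτ11] at hcon; linarith
  set β : ℝ := (τ - 1) * (α + r) / (2 * τ * r) with hβ_def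
  have hβpos : 0 < β := by
    rw [hβ_def]
    apply div_pos (by nlinarith) (by nlinarith)
  have hβr2 : 2 * τ * (β * r) = (τ - 1) * (α + r) := by
    rw [hβ_def]; field_simp
  have hβ1 : β < 1 := by
    rw [hβ_def, div_lt_one (by nlinarith)]; nlinarith
  have hA : 0 < α - β * r := by nlinarith [hβr2]
  have htauA : τ * (α - β * r) < α + r := by nlinarith [hβr2, hcon']
  set Cβ : ℝ := (α + r) / (α - β * r) with hCβ_def
  have hCβτ : τ < Cβ := by rw [hCβ_def, lt_div_iff₀ hA]; linarith
  set K₀ : ℝ := 1 / (2 * (1 - β)) + 1 with hK₀_def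
  have hK₀pos : 0 < K₀ := by
    rw [hK₀_def]
    have : 0 < 1 / (2 * (1 - β)) := by apply div_pos one_pos; nlinarith
    linarith
  set N₀ : ℝ := τ * (Cβ + K₀) / (Cβ - τ) with hN₀_def
  set q₀ : ℝ := (α - β * r) / (α + r) with hq₀_def
  have hq₀pos : 0 < q₀ := div_pos hA (by linarith)
  have hq₀1 : q₀ < 1 := by
    rw [hq₀_def, div_lt_one (by linarith)]
    nlinarith
  clear_value α β Cβ K₀ N₀ q₀
  -- choose H
  have hsm : Summable (fun H : ℕ => (H:ℝ)^1 * q₀^H) :=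
    summable_pow_mul_geometric_of_norm_lt_one 1
      (by rw [Real.norm_eq_abs, abs_of_pos hq₀pos]; exact hq₀1)
  have hev1 : ∀ᶠ H : ℕ in Filter.atTop, (H:ℝ)^1 * q₀^H < q₀ :=
    hsm.tendsto_atTop_zero.eventually_lt_const hq₀pos
  have hev2 : ∀ᶠ H : ℕ in Filter.atTop, ⌈N₀⌉₊ + 1 ≤ H := Filter.eventually_ge_atTop _
  obtain ⟨H, hHq, hHN⟩ := (hev1.and hev2).exists
  have hH1 : 1 ≤ H := le_trans (by omega) hHN
  have hN₀H : N₀ < (H:ℝ) := by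
    calc N₀ ≤ (⌈N₀⌉₊ : ℝ) := Nat.le_ceil _
      _ < ((⌈N₀⌉₊ + 1 : ℕ) : ℝ) := by push_cast; linarith
      _ ≤ H := by exact_mod_cast hHN
  have hHq' : (H:ℝ) * q₀^(H-1) ≤ 1 := by
    have h1 : ((H:ℝ) * q₀^(H-1)) * q₀ < 1 * q₀ := by
      rw [one_mul]
      calc (H:ℝ) * q₀^(H-1) * q₀ = (H:ℝ)^1 * q₀^H := by
            rw [pow_one, mul_assoc, ← pow_succ]
            congr 2
            omega
        _ < q₀ := hHq
    exact le_of_lt (lt_of_mul_lt_mul_right h1 hq₀pos.le)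
  set c' : ℝ := 1 / (4 * (α + r) ^ H) with hc'_def
  have hc'pos : 0 < c' := by
    rw [hc'_def]
    apply div_pos one_pos
    have := pow_pos (show (0:ℝ) < α + r by linarith) H
    linarith
  set ε : ℝ := min (1/16) (c' * r^H / 2) with hε_def
  have hεpos : 0 < ε := lt_min (by norm_num) (half_pos (mul_pos hc'pos (pow_pos hr H)))
  have hε16 : ε ≤ 1/16 := min_le_left _ _
  have hεc : ε ≤ c' * r^H / 2 := min_le_right _ _
  set c'' : ℂ := ((c' : ℝ) : ℂ) with hc''_def
  have habsc'' : ‖c''‖ = c' := by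
    rw [hc''_def, Complex.norm_real, Real.norm_eq_abs, abs_of_pos hc'pos]
  set φ : Polynomial ℂ := 1 + Polynomial.C c'' * Polynomial.X ^ H with hφ_def
  have hφdeg : φ.natDegree ≤ H := by
    rw [hφ_def]
    refine le_trans (Polynomial.natDegree_add_le _ _) (max_le (by simp) ?_)
    exact le_trans (Polynomial.natDegree_C_mul_le _ _)
      (le_of_eq (Polynomial.natDegree_X_pow H))
  obtain ⟨n, P, hdeg, hgap, happ⟩ := happrox φ ε hεpos
  -- Step 1 : H ≤ n
  have hHn : H ≤ n := by
    by_contra hn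
    push_neg at hn
    have hQdeg : (P - φ).natDegree ≤ H :=
      le_trans (Polynomial.natDegree_sub_le _ _) (max_le (le_trans hdeg hn.le) hφdeg)
    have hPH : P.coeff H = 0 :=
      Polynomial.coeff_eq_zero_of_natDegree_lt (lt_of_le_of_lt hdeg hn)
    have hφH : φ.coeff H = c'' := by
      rw [hφ_def, Polynomial.coeff_add, Polynomial.coeff_one, Polynomial.coeff_C_mul,
        Polynomial.coeff_X_pow, if_neg (by omega : ¬ H = 0), if_pos rfl, mul_one, zero_add]
    have hQH : (P - φ).coeff H = -c'' := by
      rw [Polynomial.coeff_sub, hPH, hφH]; ring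
    have htay : ((Polynomial.taylor a) (P - φ)).coeff H = -c'' := by
      rw [Polynomial.taylor_coeff]
      have hhd : Polynomial.hasseDeriv H (P - φ) = Polynomial.C (-c'') := by
        ext j
        rw [Polynomial.hasseDeriv_coeff, Polynomial.coeff_C]
        rcases Nat.eq_zero_or_pos j with hj | hj
        · subst hj
          rw [if_pos rfl, zero_add, Nat.choose_self, Nat.cast_one, one_mul, hQH]
        · rw [if_neg (by omega)]
          have : (P - φ).coeff (j + H) = 0 :=
            Polynomial.coeff_eq_zero_of_natDegree_lt (lt_of_le_of_lt hQdeg (by omega))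
          rw [this, mul_zero]
      rw [hhd, Polynomial.eval_C]
    have hbnd := Stmt16Aux.taylor_coeff_bound (P - φ) H H le_rfl hQdeg a r ε hr ?_
    · rw [htay, norm_neg, habsc''] at hbnd
      nlinarith [mul_pos hc'pos (pow_pos hr H), hεc, hbnd]
    · intro z hz
      have hmem : z ∈ Metric.closedBall a r := by
        rw [Metric.mem_closedBall, Complex.dist_eq, hz]
      rw [Polynomial.eval_sub]
      exact happ z hmem

  -- basic geometric setup
  set m : ℕ := ⌊(n : ℝ) / τ⌋₊ with hm_def
  have hαC : ((α:ℝ):ℂ) ≠ 0 := by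
    exact_mod_cast hαpos.ne'
  have ha0 : a ≠ 0 := by
    intro h
    rw [hα_def, h, norm_zero] at hαpos
    exact lt_irrefl _ hαpos
  set u : ℂ := a / ((α : ℝ) : ℂ) with hu_def
  have hu0 : u ≠ 0 := div_ne_zero ha0 hαC
  have habsu : ‖u‖ = 1 := by
    rw [hu_def, norm_div, Complex.norm_real, Real.norm_eq_abs, abs_of_pos hαpos, ← hα_def,
      div_self hαpos.ne']
  have hunorm : Complex.normSq u = 1 := by
    rw [← Complex.sq_norm, habsu, one_pow]
  have ha_eq : a = ((α:ℝ):ℂ) * u := by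
    rw [hu_def, mul_div_cancel₀ _ hαC]
  set z₀ : ℂ := a - ((β * r : ℝ) : ℂ) * u with hz₀_def
  have hz₀eq : z₀ = ((α - β * r : ℝ) : ℂ) * u := by
    rw [hz₀_def]
    nth_rewrite 1 [ha_eq]
    push_cast
    ring
  have habsz₀ : ‖z₀‖ = α - β * r := by
    rw [hz₀eq, norm_mul, habsu, mul_one, Complex.norm_real, Real.norm_eq_abs, abs_of_pos hA]
  have habsz₀a : ‖z₀ - a‖ = β * r := by
    have h1 : z₀ - a = -(((β*r:ℝ):ℂ) * u) := by rw [hz₀_def]; ring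
    rw [h1, norm_neg, norm_mul, habsu, mul_one, Complex.norm_real, Real.norm_eq_abs,
      abs_of_pos (mul_pos hβpos hr)]
  have hz₀mem : z₀ ∈ Metric.closedBall a r := by
    rw [Metric.mem_closedBall, Complex.dist_eq, habsz₀a]
    exact mul_le_of_le_one_left hr.le hβ1.le
  -- the reduced polynomial R and low part L
  set R : Polynomial ℂ := if m ≤ H then P - Polynomial.C c'' * Polynomial.X ^ H else P
    with hR_def
  set L : Polynomial ℂ := if m ≤ H then 1 else φ with hL_def
  have hpoly : R = P - φ + L := by
    rw [hR_def, hL_def, hφ_def]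
    split_ifs with h <;> ring
  have hRdeg : R.natDegree ≤ n := by
    rw [hR_def]
    split_ifs with h
    · refine le_trans (Polynomial.natDegree_sub_le _ _) (max_le hdeg ?_)
      exact le_trans (le_trans (Polynomial.natDegree_C_mul_le _ _)
        (le_of_eq (Polynomial.natDegree_X_pow H))) hHn
    · exact hdeg
  have hRgap : ∀ k, k < m → R.coeff k = 0 := by
    intro k hk
    rw [hR_def]
    split_ifs with h
    · rw [Polynomial.coeff_sub, hgap k hk, Polynomial.coeff_C_mul, Polynomial.coeff_X_pow,
        if_neg (by omega), mul_zero, sub_zero]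
    · exact hgap k hk
  have hLval : ∀ z ∈ Metric.closedBall a r, ‖L.eval z - 1‖ ≤ 1/4 := by
    intro z hz
    rw [hL_def]
    split_ifs with h
    · simp
    · rw [hφ_def]
      simp only [Polynomial.eval_add, Polynomial.eval_one, Polynomial.eval_mul,
        Polynomial.eval_C, Polynomial.eval_pow, Polynomial.eval_X, add_sub_cancel_left]
      have habsz : ‖z‖ ≤ α + r := by
        have h1 : ‖z‖ ≤ ‖z - a‖ + ‖a‖ := by
          calc ‖z‖ = ‖(z - a) + a‖ := by congr 1; ring
            _ ≤ _ := norm_add_le _ _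
        have h2 : ‖z - a‖ ≤ r := by
          rw [← Complex.dist_eq]; exact Metric.mem_closedBall.mp hz
        rw [← hα_def] at h1
        linarith
      rw [norm_mul, norm_pow, habsc'']
      calc c' * ‖z‖ ^ H ≤ c' * (α + r) ^ H :=
            mul_le_mul_of_nonneg_left
              (pow_le_pow_left₀ (norm_nonneg z) habsz H) hc'pos.le
        _ = 1/4 := by
            rw [hc'_def]
            have := pow_pos (show (0:ℝ) < α + r by linarith) H
            field_simp
  have hRL : ∀ z ∈ Metric.closedBall a r, ‖R.eval z - L.eval z‖ ≤ ε := by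
    intro z hz
    have h1 : R.eval z - L.eval z = P.eval z - φ.eval z := by
      rw [hpoly]
      simp only [Polynomial.eval_add, Polynomial.eval_sub]
      ring
    rw [h1]
    exact happ z hz
  have hRlow : ∀ z ∈ Metric.closedBall a r, 1/2 ≤ ‖R.eval z‖ := by
    intro z hz
    have h1 := hLval z hz
    have h2 := hRL z hz
    have h3 : (1:ℝ) ≤ ‖L.eval z‖ + ‖L.eval z - 1‖ := by
      calc (1:ℝ) = ‖L.eval z + (1 - L.eval z)‖ := by norm_num
        _ ≤ ‖L.eval z‖ + ‖1 - L.eval z‖ := norm_add_le _ _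
        _ = ‖L.eval z‖ + ‖L.eval z - 1‖ := by
            rw [show (1:ℂ) - L.eval z = -(L.eval z - 1) from by ring, norm_neg]
    have h4 : ‖L.eval z‖ ≤ ‖R.eval z‖ + ‖R.eval z - L.eval z‖ := by
      calc ‖L.eval z‖ = ‖R.eval z + (L.eval z - R.eval z)‖ := by
            congr 1; ring
        _ ≤ ‖R.eval z‖ + ‖L.eval z - R.eval z‖ := norm_add_le _ _
        _ = ‖R.eval z‖ + ‖R.eval z - L.eval z‖ := by
            rw [show L.eval z - R.eval z = -(R.eval z - L.eval z) from by ring, norm_neg]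
    linarith [hε16]
  have hR0 : R ≠ 0 := by
    intro h
    have h1 := hRlow a (Metric.mem_closedBall_self hr.le)
    rw [h] at h1
    simp at h1
    linarith
  -- derivative bounds at z₀
  set s' : ℝ := (1 - β) * r / 2 with hs'_def
  have hs'pos : 0 < s' := by rw [hs'_def]; nlinarith only [hβ1, hr]
  have hPφdeg : (P - φ).natDegree ≤ n :=
    le_trans (Polynomial.natDegree_sub_le _ _) (max_le hdeg (le_trans hφdeg hHn))
  have hderiv1 : ‖(Polynomial.derivative (P - φ)).eval z₀‖ ≤ ε / s' := by
    have hb := Stmt16Aux.taylor_coeff_bound (P - φ) n 1 (by omega) hPφdeg z₀ s' ε hs'pos ?_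
    · rw [Polynomial.taylor_coeff_one, pow_one] at hb
      rw [le_div_iff₀ hs'pos]
      exact hb
    · intro z hz
      have hmem : z ∈ Metric.closedBall a r := by
        rw [Metric.mem_closedBall, Complex.dist_eq]
        have h1 : ‖z - a‖ ≤ ‖z - z₀‖ + ‖z₀ - a‖ := by
          calc ‖z - a‖ = ‖(z - z₀) + (z₀ - a)‖ := by congr 1; ring
            _ ≤ _ := norm_add_le _ _
        rw [hz, habsz₀a, hs'_def] at h1
        nlinarith only [h1, hβ1, hr]
      rw [Polynomial.eval_sub]
      exact happ z hmem
  set γ : ℝ := (H:ℝ) * c' * (α - β*r)^(H-1) with hγ_def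
  have hγ0 : 0 ≤ γ := by
    rw [hγ_def]
    exact mul_nonneg (mul_nonneg (Nat.cast_nonneg H) hc'pos.le) (pow_nonneg hA.le _)
  have hLderiv : ‖(Polynomial.derivative L).eval z₀‖ ≤ γ := by
    rw [hL_def]
    split_ifs with h
    · simpa using hγ0
    · rw [hφ_def, Polynomial.derivative_add, Polynomial.derivative_one, zero_add,
        Polynomial.derivative_C_mul, Polynomial.derivative_X_pow]
      refine le_of_eq ?_
      rw [Polynomial.eval_mul, Polynomial.eval_C, Polynomial.eval_mul, Polynomial.eval_C,
        Polynomial.eval_pow, Polynomial.eval_X, norm_mul, norm_mul, norm_pow, habsc'',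
        habsz₀, Complex.norm_natCast, hγ_def]
      ring
  have hRderiv : ‖(Polynomial.derivative R).eval z₀‖ ≤ ε / s' + γ := by
    have h1 : Polynomial.derivative R
        = Polynomial.derivative (P - φ) + Polynomial.derivative L := by
      rw [hpoly, Polynomial.derivative_add]
    rw [h1, Polynomial.eval_add]
    exact le_trans (norm_add_le _ _) (add_le_add hderiv1 hLderiv)
  -- roots
  set W : Multiset ℂ := R.roots with hW_def
  have hsplits : Polynomial.Splits R := IsAlgClosed.splits R
  have hcardW : Multiset.card W = R.natDegree := by
    rw [hW_def]; exact (Polynomial.splits_iff_card_roots.mp hsplits)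
  have hfact : R = Polynomial.C R.leadingCoeff
      * (W.map fun w => Polynomial.X - Polynomial.C w).prod := by
    rw [hW_def]; exact hsplits.eq_prod_roots
  have hroots_out : ∀ w ∈ W, r ≤ ‖w - a‖ := by
    intro w hw
    by_contra hlt
    push_neg at hlt
    have hmem : w ∈ Metric.closedBall a r := by
      rw [Metric.mem_closedBall, Complex.dist_eq]; exact hlt.le
    have h1 := hRlow w hmem
    have h2 : R.eval w = 0 := (Polynomial.mem_roots'.mp hw).2
    rw [h2, norm_zero] at h1
    linarith only [h1]
  have hz₀ne : ∀ w ∈ W, z₀ ≠ w := by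
    intro w hw heq
    have h1 := hroots_out w hw
    rw [← heq, habsz₀a] at h1
    nlinarith only [h1, hβ1, hr]
  set Ssum : ℂ := (W.map fun w => (z₀ - w)⁻¹).sum with hSsum_def
  have hid : (Polynomial.derivative R).eval z₀ = R.eval z₀ * Ssum := by
    have h := Stmt16Aux.logderiv_eval R.leadingCoeff W z₀ hz₀ne
    rw [← hfact] at h
    exact h
  have hRz₀ : 1/2 ≤ ‖R.eval z₀‖ := hRlow z₀ hz₀mem
  have hSsum_abs : ‖Ssum‖ ≤ 2 * (ε / s' + γ) := by
    have h1 : ‖Ssum‖ * (1/2) ≤ ‖Ssum‖ * ‖R.eval z₀‖ :=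
      mul_le_mul_of_nonneg_left hRz₀ (norm_nonneg _)
    have h2 : ‖R.eval z₀‖ * ‖Ssum‖
        = ‖(Polynomial.derivative R).eval z₀‖ := by
      rw [hid, norm_mul]
    linarith only [hRderiv, h1, h2]
  -- real parts
  set g : ℂ → ℝ := fun w => ((-2 * (r:ℂ)) * u * (z₀ - w)⁻¹).re with hg_def
  have hre_eq : ((-2*(r:ℂ)) * u * Ssum).re = (W.map g).sum := by
    have h1 : (-2*(r:ℂ)) * u * Ssum
        = (W.map fun w => (-2*(r:ℂ)) * u * (z₀ - w)⁻¹).sum := by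
      rw [hSsum_def, ← Multiset.sum_map_mul_left]
    rw [h1, Stmt16Aux.re_multiset_sum, Multiset.map_map]
    rfl
  have hgw : ∀ w ∈ W, g w ≤ 2 / (1 + β) := by
    intro w hw
    have h1 : z₀ - w = -(((β*r:ℝ):ℂ) * u + (w - a)) := by rw [hz₀_def]; ring
    show ((-2 * (r:ℂ)) * u * (z₀ - w)⁻¹).re ≤ 2/(1+β)
    rw [h1]
    exact Stmt16Aux.root_re_bound u (w - a) r β hr hβpos.le hβ1 hunorm (hroots_out w hw)
  have hg0 : g 0 = -(2*r) / (α - β*r) := by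
    show ((-2 * (r:ℂ)) * u * (z₀ - 0)⁻¹).re = _
    have hAne : ((α - β*r : ℝ) : ℂ) ≠ 0 := by exact_mod_cast hA.ne'
    have h2 : (-2 * (r:ℂ)) * u * (z₀ - 0)⁻¹ = ((-(2*r)/(α - β*r) : ℝ) : ℂ) := by
      rw [sub_zero, hz₀eq, mul_inv]
      rw [show (-2 * (r:ℂ)) * u * ((((α - β*r:ℝ)):ℂ)⁻¹ * u⁻¹)
          = (-2 * (r:ℂ)) * (u * u⁻¹) * ((((α - β*r:ℝ)):ℂ))⁻¹ from by ring,
        mul_inv_cancel₀ hu0, mul_one]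
      push_cast
      field_simp
    rw [h2, Complex.ofReal_re]
  -- sum splitting
  set m'' : ℕ := W.count 0 with hm''_def
  have hmm'' : m ≤ m'' := by
    rw [hm''_def, hW_def, Polynomial.count_roots]
    refine (Polynomial.le_rootMultiplicity_iff hR0).mpr ?_
    rw [Polynomial.C_0, sub_zero]
    exact Polynomial.X_pow_dvd_iff.mpr hRgap
  have hsplitW : W.filter (fun w => w = 0) + W.filter (fun w => ¬ w = 0) = W :=
    Multiset.filter_add_not _ W
  have hfilter0 : W.filter (fun w => w = 0) = Multiset.replicate m'' 0 := by
    rw [hm''_def]; exact Multiset.filter_eq' W 0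
  set k₂ : ℕ := Multiset.card (W.filter (fun w => ¬ w = 0)) with hk₂_def
  have hcards : m'' + k₂ = Multiset.card W := by
    conv_rhs => rw [← hsplitW]
    rw [Multiset.card_add, hfilter0, Multiset.card_replicate]
  have hsum_le : (W.map g).sum ≤ (m'':ℝ) * (-(2*r)/(α - β*r)) + (k₂:ℝ) * (2/(1+β)) := by
    have h1 : (W.map g).sum = ((W.filter (fun w => w = 0)).map g).sum
        + ((W.filter (fun w => ¬ w = 0)).map g).sum := by
      conv_lhs => rw [← hsplitW]
      rw [Multiset.map_add, Multiset.sum_add]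
    rw [h1, hfilter0, Multiset.map_replicate, Multiset.sum_replicate]
    have h2 : ((W.filter (fun w => ¬ w = 0)).map g).sum ≤ (k₂:ℝ) * (2/(1+β)) := by
      have h3 := Multiset.sum_le_card_nsmul ((W.filter (fun w => ¬ w = 0)).map g)
        (2/(1+β)) ?_
      · rw [Multiset.card_map] at h3
        rw [hk₂_def]
        simpa [nsmul_eq_mul] using h3
      · intro x hx
        obtain ⟨w, hw, rfl⟩ := Multiset.mem_map.mp hx
        exact hgw w (Multiset.mem_of_mem_filter hw)
    have h4 : m'' • g 0 = (m'':ℝ) * (-(2*r)/(α-β*r)) := by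
      rw [hg0, nsmul_eq_mul]
    rw [h4]
    linarith only [h2]
  have hG0neg : -(2*r)/(α - β*r) ≤ 0 :=
    div_nonpos_of_nonpos_of_nonneg (by linarith) hA.le
  have hMpos : (0:ℝ) ≤ 2/(1+β) := by positivity
  have hcast1 : (m:ℝ) ≤ (m'':ℝ) := by exact_mod_cast hmm''
  have hcast2 : (m'':ℝ) + (k₂:ℝ) = (Multiset.card W : ℝ) := by exact_mod_cast hcards
  have hcast3 : (Multiset.card W : ℝ) ≤ (n:ℝ) := by
    have : Multiset.card W ≤ n := le_trans (le_of_eq hcardW) hRdeg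
    exact_mod_cast this
  have hsum_le2 : (W.map g).sum ≤ (m:ℝ) * (-(2*r)/(α - β*r)) + ((n:ℝ) - m) * (2/(1+β)) := by
    have hint1 : 0 ≤ ((m'':ℝ) - m) * (-(-(2*r)/(α - β*r))) :=
      mul_nonneg (by linarith only [hcast1]) (by linarith only [hG0neg])
    have hint2 : 0 ≤ ((n:ℝ) - m - k₂) * (2/(1+β)) :=
      mul_nonneg (by linarith only [hcast1, hcast2, hcast3]) hMpos
    linarith only [hsum_le, hint1, hint2]
  have hlower : -(2*r*(2*(ε/s' + γ))) ≤ (W.map g).sum := by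
    have h1 : -‖(-2*(r:ℂ)) * u * Ssum‖ ≤ ((-2*(r:ℂ)) * u * Ssum).re :=
      (abs_le.mp (Complex.abs_re_le_norm _)).1
    have h2 : ‖(-2*(r:ℂ)) * u * Ssum‖ = 2*r*‖Ssum‖ := by
      rw [norm_mul, norm_mul]
      have h3 : ‖-2*(r:ℂ)‖ = 2*r := by
        rw [show (-2*(r:ℂ)) = ((-(2*r) : ℝ):ℂ) from by push_cast; ring,
          Complex.norm_real, Real.norm_eq_abs, abs_of_neg (by linarith), neg_neg]
      rw [h3, habsu, mul_one]
    rw [hre_eq, h2] at h1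
    linarith only [h1, mul_le_mul_of_nonneg_left hSsum_abs (by linarith only [hr] : (0:ℝ) ≤ 2*r)]
  -- numeric endgame
  have hstep_a : 0 ≤ (m:ℝ) * (-(2*r)/(α - β*r)) + ((n:ℝ) - m) * (2/(1+β))
      + 4*r*(ε/s' + γ) := by linarith only [hsum_le2, hlower]
  have hstep_b : (m:ℝ) * (α + r) ≤ (n:ℝ) * (α - β*r)
      + (4*r*(ε/s' + γ)) * ((α - β*r) * (1+β) / 2) := by
    have hcpos : (0:ℝ) ≤ (α - β*r)*(1+β)/2 := by
      apply div_nonneg (mul_nonneg hA.le (by linarith only [hβpos])) (by norm_num)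
    have hmul := mul_le_mul_of_nonneg_right hstep_a hcpos
    rw [zero_mul] at hmul
    have hexp : ((m:ℝ) * (-(2*r)/(α - β*r)) + ((n:ℝ) - m) * (2/(1+β))
          + 4*r*(ε/s' + γ)) * ((α - β*r)*(1+β)/2)
        = -((m:ℝ)*r*(1+β)) + ((n:ℝ) - m)*(α - β*r)
          + (4*r*(ε/s' + γ))*((α - β*r)*(1+β)/2) := by
      have e1 : (α - β*r)⁻¹ * (α - β*r) = 1 := inv_mul_cancel₀ hA.ne'
      have e2 : (1 + β)⁻¹ * (1 + β) = 1 := inv_mul_cancel₀ (by linarith only [hβpos])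
      simp only [div_eq_mul_inv]
      linear_combination (-(m:ℝ)*r*(1+β)) * e1 + ((n:ℝ) - m)*(α - β*r) * e2
    rw [hexp] at hmul
    linarith only [hmul]
  have hE''a : 4*r*(ε/s') ≤ 1/(2*(1-β)) := by
    have h1 : 4*r*(ε/s') = 8*ε/(1-β) := by
      rw [hs'_def]
      field_simp
      ring
    rw [h1, div_le_div_iff₀ (by linarith only [hβ1] : (0:ℝ) < 1-β)
      (by linarith only [hβ1] : (0:ℝ) < 2*(1-β))]
    nlinarith only [hε16, hβ1, hεpos,
      mul_nonneg (by linarith only [hε16] : (0:ℝ) ≤ 1 - 16*ε)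
        (by linarith only [hβ1] : (0:ℝ) ≤ 1-β)]
  have hE''b : 4*r*γ ≤ 1 := by
    have h1 : 4*r*γ = (r/(α+r)) * ((H:ℝ) * q₀^(H-1)) := by
      rw [hγ_def, hc'_def, hq₀_def, div_pow]
      rw [show (α+r)^H = (α+r)^(H-1) * (α+r) from by
        rw [← pow_succ]; congr 1; omega]
      have h2 : (0:ℝ) < (α+r)^(H-1) := pow_pos (by linarith only [hαpos, hr]) _
      field_simp
    rw [h1]
    have h2 : r/(α+r) ≤ 1 := by
      rw [div_le_one (by linarith only [hαpos, hr])]; linarith only [hαpos]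
    have h3 : (0:ℝ) ≤ (H:ℝ) * q₀^(H-1) :=
      mul_nonneg (Nat.cast_nonneg H) (pow_nonneg hq₀pos.le _)
    have h4 : (0:ℝ) ≤ r/(α+r) := div_nonneg hr.le (by linarith only [hαpos, hr])
    nlinarith only [hHq', h2, h3, h4]
  have hE'' : 4*r*(ε/s' + γ) ≤ K₀ := by
    have h1 : 4*r*(ε/s' + γ) = 4*r*(ε/s') + 4*r*γ := by ring
    rw [h1, hK₀_def]
    linarith only [hE''a, hE''b]
  have hE''pos : 0 ≤ 4*r*(ε/s' + γ) := by
    have h5 : 0 ≤ ε/s' := le_of_lt (div_pos hεpos hs'pos)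
    nlinarith only [h5, hγ0, hr]
  have hfinal : (m:ℝ) * (α + r) ≤ ((n:ℝ) + K₀) * (α - β*r) := by
    have h2 : (4*r*(ε/s'+γ))*((1+β)/2) ≤ K₀ := by
      nlinarith only [hE'', hE''pos, hβ1, hβpos,
        mul_nonneg hE''pos (by linarith only [hβ1] : (0:ℝ) ≤ 1-β)]
    have h3 : (4*r*(ε/s'+γ))*((α - β*r)*(1+β)/2) ≤ K₀ * (α - β*r) := by
      have h6 := mul_le_mul_of_nonneg_right h2 hA.le
      linarith only [h6]
    linarith only [hstep_b, h3]
  have hf2 : (m:ℝ) * Cβ ≤ (n:ℝ) + K₀ := by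
    rw [hCβ_def, ← mul_div_assoc, div_le_iff₀ hA]
    exact hfinal
  have hfloor : (n:ℝ)/τ < (m:ℝ) + 1 := by
    have h1 := Nat.lt_floor_add_one ((n:ℝ)/τ)
    rw [hm_def]
    push_cast
    exact_mod_cast h1
  have hn_lt : (n:ℝ) < τ * ((m:ℝ)+1) := by
    rw [div_lt_iff₀ hτp] at hfloor
    linarith
  have hHn' : (H:ℝ) ≤ (n:ℝ) := by exact_mod_cast hHn
  have hf4 : τ*(Cβ + K₀) < (n:ℝ)*(Cβ - τ) := by
    have h1 : N₀ < (n:ℝ) := lt_of_lt_of_le hN₀H hHn'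
    rw [hN₀_def, div_lt_iff₀ (by linarith : (0:ℝ) < Cβ - τ)] at h1
    linarith
  have hmnn : (0:ℝ) ≤ (m:ℝ) := Nat.cast_nonneg m
  nlinarith only [hf4, hn_lt, hf2, hCβτ, hK₀pos, hmnn, hτp,
    mul_lt_mul_of_pos_right hn_lt (by linarith only [hCβτ] : (0:ℝ) < Cβ - τ),
    mul_le_mul_of_nonneg_left hf2 hτp.le,
    mul_lt_mul_of_pos_left hn_lt hτp]

end Stmt16Aux

/-- Proposition 2.13: if every polynomial can be uniformly approximated
on the closed disc `D(a,r)` (with `0 ∉ D(a,r)`) by polynomials of the form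
`∑_{k=⌊n/τ⌋}^n a_k z^k`, then `r ≤ |a| (τ-1)/(τ+1)`. -/
theorem stmt16 (τ : ℝ) (hτ : 1 < τ) (a : ℂ) (r : ℝ) (hr : 0 < r)
    (h0 : (0 : ℂ) ∉ Metric.ball a r)
    (happrox : ∀ φ : Polynomial ℂ, ∀ ε : ℝ, 0 < ε →
      ∃ n : ℕ, ∃ P : Polynomial ℂ, P.natDegree ≤ n ∧
        (∀ k : ℕ, k < ⌊(n : ℝ) / τ⌋₊ → P.coeff k = 0) ∧
        ∀ z ∈ Metric.closedBall a r, ‖P.eval z - φ.eval z‖ ≤ ε) :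
    r ≤ ‖a‖ * (τ - 1) / (τ + 1) :=
  Stmt16Aux.main τ hτ a r hr h0 happrox
end

section
/- For every τ > 1, there exists a compact set K ⊂ ℂ∖{0} with non-empty interior and connected complement such that the set of all polynomials of the form ∑_{k=⌊n/τ⌋}^{n} a_k z^k (n ranging over ℕ) is not dense in A(K): there exist a function φ continuous on K and holomorphic in the interior of K and an ε > 0 such that ‖P − φ‖_K ≥ ε for every n and every polynomial P of this form. -/
open Polynomial Metric Set

noncomputable def Complex.abs : AbsoluteValue ℂ ℝ where
  toFun := fun z => ‖z‖
  map_mul' := norm_mul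
  nonneg' := norm_nonneg
  eq_zero' := fun _ => norm_eq_zero
  add_le' := norm_add_le

lemma Complex.sq_abs (z : ℂ) : Complex.abs z ^ 2 = Complex.normSq z := Complex.sq_norm z

lemma Complex.abs_apply (z : ℂ) : Complex.abs z = ‖z‖ := rfl

lemma Complex.norm_eq_abs (z : ℂ) : ‖z‖ = Complex.abs z := rfl

lemma Complex.abs_ofReal (r : ℝ) : Complex.abs (r : ℂ) = |r| := by
  show ‖(r : ℂ)‖ = |r|
  simp

lemma Complex.abs_re_le_abs (z : ℂ) : |z.re| ≤ Complex.abs z := Complex.abs_re_le_norm z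

lemma Complex.continuous_abs : Continuous Complex.abs := continuous_norm

lemma dist_sq_complex (w : ℂ) (c : ℝ) :
    (Complex.abs (w - c))^2 = (w.re - c)^2 + w.im^2 := by
  rw [Complex.sq_abs, Complex.normSq_apply]
  simp [Complex.sub_re, Complex.sub_im]
  ring

lemma poly_growth (Q : Polynomial ℂ) (s : ℕ) (hs : Q.natDegree ≤ s) (c : ℂ) (r M : ℝ)
    (hr : 0 < r) (hM : ∀ z : ℂ, Complex.abs (z - c) = r → Complex.abs (Q.eval z) ≤ M)
    (w : ℂ) (hw : r ≤ Complex.abs (w - c)) :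
    Complex.abs (Q.eval w) ≤ M * (Complex.abs (w - c) / r) ^ s := by
  set A : Polynomial ℂ := Q.comp (Polynomial.C c + Polynomial.C (r:ℂ) * X) with hA
  have hAdeg : A.natDegree ≤ s := by
    refine le_trans (Polynomial.natDegree_comp_le) ?_
    have h1 : (Polynomial.C c + Polynomial.C (r:ℂ) * X).natDegree ≤ 1 := by
      compute_degree
    calc Q.natDegree * (Polynomial.C c + Polynomial.C (r:ℂ) * X).natDegree
        ≤ Q.natDegree * 1 := Nat.mul_le_mul_left _ h1
      _ ≤ s := by simpa using hs
  set R : Polynomial ℂ := ∑ k ∈ Finset.range (s+1), Polynomial.C (A.coeff k) * X^(s - k) with hR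
  have hAeval : ∀ x : ℂ, A.eval x = Q.eval (c + r * x) := by
    intro x; rw [hA, Polynomial.eval_comp]; simp
  have key : ∀ u : ℂ, u ≠ 0 → R.eval u = A.eval u⁻¹ * u^s := by
    intro u hu
    rw [Polynomial.eval_eq_sum_range' (lt_of_le_of_lt hAdeg (Nat.lt_succ_self s)) (u⁻¹)]
    rw [hR]
    rw [Polynomial.eval_finset_sum]
    rw [Finset.sum_mul]
    refine Finset.sum_congr rfl ?_
    intro k hk
    simp only [Finset.mem_range, Nat.lt_succ_iff] at hk
    simp only [Polynomial.eval_mul, Polynomial.eval_C, Polynomial.eval_pow, Polynomial.eval_X]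
    have : u ^ s = u ^ k * u ^ (s - k) := by
      rw [← pow_add]; congr 1; omega
    rw [this, inv_pow]
    field_simp
  have hcirc : ∀ u : ℂ, Complex.abs u = 1 → Complex.abs (R.eval u) ≤ M := by
    intro u hu
    have hu0 : u ≠ 0 := by
      intro h; rw [h] at hu; simp at hu
    rw [key u hu0, map_mul, map_pow, hu, one_pow, mul_one, hAeval]
    apply hM
    have : c + ↑r * u⁻¹ - c = ↑r * u⁻¹ := by ring
    rw [this, map_mul, map_inv₀, hu, inv_one, mul_one, Complex.abs_ofReal,
      abs_of_pos hr]
  -- max modulus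
  have hmax : ∀ u : ℂ, Complex.abs u ≤ 1 → Complex.abs (R.eval u) ≤ M := by
    intro u hu
    have h1 : u ∈ closure (ball (0:ℂ) 1) := by
      rw [closure_ball (0:ℂ) (one_ne_zero)]
      simpa [Complex.abs_apply] using hu
    rw [← Complex.norm_eq_abs]
    refine Complex.norm_le_of_forall_mem_frontier_norm_le (isBounded_ball)
      (f := fun z => R.eval z) ?_ ?_ h1
    · exact (R.differentiable.comp differentiable_id).diffContOnCl
    · intro z hz
      rw [frontier_ball (0:ℂ) (one_ne_zero)] at hz
      simp only [mem_sphere_iff_norm, sub_zero] at hz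
      rw [Complex.norm_eq_abs]
      exact hcirc z (by simpa [Complex.abs_apply] using hz)
  -- apply at u₀
  have hwc : w - c ≠ 0 := by
    intro h; rw [h] at hw; simp at hw; linarith
  set u₀ : ℂ := (r : ℂ) / (w - c) with hu₀
  have hu₀0 : u₀ ≠ 0 := by
    apply div_ne_zero _ hwc
    simpa using hr.ne'
  have habs : Complex.abs u₀ = r / Complex.abs (w - c) := by
    rw [hu₀, map_div₀, Complex.abs_ofReal, abs_of_pos hr]
  have hle1 : Complex.abs u₀ ≤ 1 := by
    rw [habs]
    rw [div_le_one (lt_of_lt_of_le hr hw)]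
    exact hw
  have hQw : A.eval u₀⁻¹ = Q.eval w := by
    rw [hAeval]
    congr 1
    have hr' : (r:ℂ) ≠ 0 := by simpa using hr.ne'
    rw [hu₀, inv_div, mul_div_assoc']
    rw [mul_comm (r:ℂ) (w - c), mul_div_assoc, div_self hr', mul_one]
    ring
  have hident := key u₀ hu₀0
  rw [hQw] at hident
  have h2 : Complex.abs (Q.eval w) * (Complex.abs u₀)^s ≤ M := by
    rw [← map_pow, ← map_mul, ← hident]
    exact hmax u₀ hle1
  have hpos : 0 < (Complex.abs u₀)^s :=
    pow_pos (by rw [habs]; exact div_pos hr (lt_of_lt_of_le hr hw)) s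
  rw [habs] at h2 hpos
  have : Complex.abs (Q.eval w) ≤ M / (r / Complex.abs (w - c))^s := by
    rw [le_div_iff₀ hpos]; exact h2
  calc Complex.abs (Q.eval w) ≤ M / (r / Complex.abs (w - c))^s := this
    _ = M * (Complex.abs (w - c) / r) ^ s := by
        rw [div_pow, div_pow]
        rw [div_div_eq_mul_div]
        rw [div_eq_mul_inv, div_eq_mul_inv]
        ring

lemma mem_cb_iff (z : ℂ) (c r : ℝ) (hr : 0 ≤ r) :
    z ∈ Metric.closedBall ((c:ℝ):ℂ) r ↔ (z.re - c)^2 + z.im^2 ≤ r^2 := by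
  rw [Metric.mem_closedBall, Complex.dist_eq, Complex.norm_eq_abs]
  constructor
  · intro h
    have h2 := pow_le_pow_left₀ (Complex.abs.nonneg _) h 2
    rwa [dist_sq_complex] at h2
  · intro h
    rw [← dist_sq_complex z c] at h
    nlinarith [Complex.abs.nonneg (z - (c:ℂ))]

/-- Sup norm of a function on a set: `sup_{z ∈ K} |g z|`. -/
noncomputable def supNorm (g : ℂ → ℂ) (K : Set ℂ) : ℝ :=
  sSup ((fun z => ‖g z‖) '' K)

set_option maxHeartbeats 2000000 in
/-- for every `τ > 1` there is a compact set `K ⊆ ℂ ∖ {0}` with non-empty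
interior and connected complement on which the incomplete polynomials
`∑_{k=⌊n/τ⌋}^n a_k z^k` are not dense in `A(K)`. -/
theorem stmt17 (τ : ℝ) (hτ : 1 < τ) :
    ∃ K : Set ℂ, IsCompact K ∧ (0 : ℂ) ∉ K ∧ (interior K).Nonempty ∧
      IsConnected Kᶜ ∧
      ∃ φ : ℂ → ℂ, ContinuousOn φ K ∧ DifferentiableOn ℂ φ (interior K) ∧
        ∃ ε : ℝ, 0 < ε ∧
          ∀ n : ℕ, ∀ P : Polynomial ℂ, P.natDegree ≤ n →
            (∀ k : ℕ, k < ⌊(n : ℝ) / τ⌋₊ → P.coeff k = 0) →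
            ε ≤ supNorm (fun z => P.eval z - φ z) K := by
  have h4 : (0:ℝ) < 4 := by norm_num
  set t : ℝ := (4:ℝ) ^ (-(τ+1)) with htdef
  have ht0 : 0 < t := Real.rpow_pos_of_pos h4 _
  have ht1 : t ≤ 1/16 := by
    have h1 : t ≤ (4:ℝ) ^ (-2:ℝ) :=
      Real.rpow_le_rpow_of_exponent_le (by norm_num) (by linarith)
    have h2 : (4:ℝ) ^ (-2:ℝ) = 1/16 := by
      rw [show (-2:ℝ) = ((-2:ℤ):ℝ) by norm_num, Real.rpow_intCast]; norm_num
    exact h1.trans (le_of_eq h2)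
  set x₀ : ℝ := t/4 with hx₀def
  set ρ : ℝ := t/8 with hρdef
  have hρ0 : 0 < ρ := by positivity
  set C : ℝ := (4:ℝ) ^ (τ+2) with hCdef
  have hC0 : 0 < C := Real.rpow_pos_of_pos h4 _
  set ε : ℝ := 1/(2*(C+1)) with hεdef
  set B₁ : Set ℂ := Metric.closedBall (((3/4:ℝ)):ℂ) (1/4) with hB₁def
  set B₂ : Set ℂ := Metric.closedBall ((x₀:ℝ):ℂ) ρ with hB₂def
  set K : Set ℂ := B₁ ∪ B₂ with hKdef
  set φ : ℂ → ℂ := fun z => if z.re < 1/2 then (1:ℂ) else 0 with hφdef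
  -- membership facts
  have hB1re : ∀ z ∈ B₁, 1/2 ≤ z.re := by
    intro z hz
    rw [hB₁def, mem_cb_iff z (3/4) (1/4) (by norm_num)] at hz
    nlinarith [sq_nonneg z.im, sq_nonneg (z.re - 3/4)]
  have hB2abs : ∀ z ∈ B₂, Complex.abs z ≤ t/2 := by
    intro z hz
    rw [hB₂def, mem_cb_iff z x₀ ρ hρ0.le] at hz
    have habs : (Complex.abs z)^2 = z.re^2 + z.im^2 := by
      have := dist_sq_complex z 0
      simpa using this
    have hre2 : z.re ≤ x₀ + ρ := by nlinarith [sq_nonneg z.im]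
    have habs2 : Complex.abs z ^ 2 ≤ (t/2)^2 := by nlinarith [sq_nonneg z.im]
    nlinarith [Complex.abs.nonneg z]
  have hB2re : ∀ z ∈ B₂, z.re < 1/4 := by
    intro z hz
    have h1 := hB2abs z hz
    have h2 : z.re ≤ Complex.abs z := le_trans (le_abs_self _) (Complex.abs_re_le_abs z)
    linarith
  have hx₀K : ((x₀:ℝ):ℂ) ∈ K := Set.mem_union_right _ (Metric.mem_closedBall_self hρ0.le)
  have hφcont : ContinuousOn φ K := by
    intro z hz
    rcases hz with hz | hz
    · have hU : {w : ℂ | 1/4 < w.re} ∈ nhds z :=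
        (isOpen_lt continuous_const Complex.continuous_re).mem_nhds
          (by simp only [Set.mem_setOf_eq]; linarith [hB1re z hz])
      have heq : φ =ᶠ[nhdsWithin z K] (fun _ => (0:ℂ)) := by
        filter_upwards [nhdsWithin_le_nhds hU, self_mem_nhdsWithin] with w hw hwK
        rcases hwK with hwK | hwK
        · exact if_neg (not_lt.mpr (by linarith [hB1re w hwK]))
        · exact absurd (hB2re w hwK) (not_lt.mpr (le_of_lt hw))
      refine ContinuousWithinAt.congr_of_eventuallyEq continuousWithinAt_const heq ?_
      exact if_neg (not_lt.mpr (by linarith [hB1re z hz]))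
    · have hU : {w : ℂ | w.re < 1/4} ∈ nhds z :=
        (isOpen_lt Complex.continuous_re continuous_const).mem_nhds
          (by simp only [Set.mem_setOf_eq]; exact hB2re z hz)
      have heq : φ =ᶠ[nhdsWithin z K] (fun _ => (1:ℂ)) := by
        filter_upwards [nhdsWithin_le_nhds hU, self_mem_nhdsWithin] with w hw hwK
        rcases hwK with hwK | hwK
        · exact absurd hw (not_lt.mpr (by linarith [hB1re w hwK]))
        · exact if_pos (by linarith)
      refine ContinuousWithinAt.congr_of_eventuallyEq continuousWithinAt_const heq ?_
      exact if_pos (by linarith [hB2re z hz])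
  refine ⟨K, ?_, ?_, ?_, ?_, φ, ?_, ?_, ε, ?_, ?_⟩
  · -- compact
    exact (isCompact_closedBall _ _).union (isCompact_closedBall _ _)
  · -- 0 ∉ K
    rintro (h | h)
    · rw [hB₁def, mem_cb_iff _ _ _ (by norm_num)] at h
      norm_num at h
    · rw [hB₂def, mem_cb_iff _ _ _ hρ0.le] at h
      simp only [Complex.zero_re, Complex.zero_im] at h
      nlinarith
  · -- interior nonempty
    refine ⟨((3/4:ℝ):ℂ), ?_⟩
    apply interior_maximal (le_trans Metric.ball_subset_closedBall
      (Set.subset_union_left)) Metric.isOpen_ball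
    exact Metric.mem_ball_self (by norm_num)
  · -- connected complement
    have hnotK : ∀ w : ℂ, (1/2 ≤ |w.im| ∨ w.re ≤ -1) → w ∉ K := by
      rintro w hw (h | h)
      · rw [hB₁def, mem_cb_iff _ _ _ (by norm_num)] at h
        rcases hw with hw | hw
        · nlinarith [sq_abs w.im, sq_nonneg (w.re - 3/4), abs_nonneg w.im]
        · nlinarith [sq_nonneg w.im]
      · rw [hB₂def, mem_cb_iff _ _ _ hρ0.le] at h
        rcases hw with hw | hw
        · nlinarith [sq_abs w.im, sq_nonneg (w.re - x₀), abs_nonneg w.im]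
        · nlinarith [sq_nonneg w.im]
    have hray : ∀ y : ℂ, y ∉ K → ∀ w : ℂ, w.re = y.re → y.im^2 ≤ w.im^2 → w ∉ K := by
      intro y hy w hre him
      rw [hKdef, Set.mem_union, not_or] at hy ⊢
      obtain ⟨hy1, hy2⟩ := hy
      constructor
      · intro hw
        apply hy1
        rw [hB₁def, mem_cb_iff _ _ _ (by norm_num)] at hw ⊢
        rw [hre] at hw
        linarith
      · intro hw
        apply hy2
        rw [hB₂def, mem_cb_iff _ _ _ hρ0.le] at hw ⊢
        rw [hre] at hw
        linarith
    have hW : IsPreconnected (({w : ℂ | w.re ≤ -1} ∪ {w : ℂ | 1/2 ≤ w.im}) ∪ {w : ℂ | w.im ≤ -1/2}) := by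
      apply IsPreconnected.union ((-2:ℂ) - Complex.I)
      · left; simp only [Set.mem_setOf_eq, Complex.sub_re]; norm_num
      · simp only [Set.mem_setOf_eq, Complex.sub_im]; norm_num
      · apply IsPreconnected.union ((-2:ℂ) + Complex.I)
        · simp only [Set.mem_setOf_eq, Complex.add_re]; norm_num
        · simp only [Set.mem_setOf_eq, Complex.add_im]; norm_num
        · exact (convex_halfSpace_re_le (-1)).isPreconnected
        · exact (convex_halfSpace_im_ge (1/2)).isPreconnected
      · exact (convex_halfSpace_im_le (-1/2)).isPreconnected
    have hWsub : (({w : ℂ | w.re ≤ -1} ∪ {w : ℂ | 1/2 ≤ w.im}) ∪ {w : ℂ | w.im ≤ -1/2}) ⊆ Kᶜ := by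
      rintro w ((h | h) | h)
      · exact hnotK w (Or.inr h)
      · exact hnotK w (Or.inl (le_trans h (le_abs_self _)))
      · refine hnotK w (Or.inl ?_)
        have h2 : -w.im ≤ |w.im| := neg_le_abs _
        simp only [Set.mem_setOf_eq] at h
        linarith
    constructor
    · refine ⟨(-2:ℂ), hnotK (-2) (Or.inr ?_)⟩
      norm_num
    · apply isPreconnected_of_forall ((-2:ℂ))
      intro y hy
      set W : Set ℂ := ({w : ℂ | w.re ≤ -1} ∪ {w : ℂ | 1/2 ≤ w.im}) ∪ {w : ℂ | w.im ≤ -1/2} with hWdef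
      by_cases him : 0 ≤ y.im
      · set V : Set ℂ := {w : ℂ | w.re = y.re ∧ y.im ≤ w.im} with hVdef
        refine ⟨V ∪ W, ?_, ?_, ?_, ?_⟩
        · rintro w (hw | hw)
          · obtain ⟨h1, h2⟩ := hw
            exact hray y hy w h1 (by nlinarith)
          · exact hWsub hw
        · right; left; left
          simp only [Set.mem_setOf_eq]; norm_num
        · left; exact ⟨rfl, le_refl _⟩
        · have him2 : (((y.re:ℝ):ℂ) + ((max y.im 1 : ℝ):ℂ) * Complex.I).im = max y.im 1 := by
            simp
          have hre2 : (((y.re:ℝ):ℂ) + ((max y.im 1 : ℝ):ℂ) * Complex.I).re = y.re := by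
            simp
          apply IsPreconnected.union (((y.re:ℝ):ℂ) + ((max y.im 1 : ℝ):ℂ) * Complex.I)
          · exact ⟨hre2, by rw [him2]; exact le_max_left _ _⟩
          · left; right
            simp only [Set.mem_setOf_eq, him2]
            exact le_trans (by norm_num) (le_max_right _ _)
          · have : V = ({w : ℂ | w.re ≤ y.re} ∩ {w : ℂ | y.re ≤ w.re}) ∩ {w : ℂ | y.im ≤ w.im} := by
              ext w
              simp only [hVdef, Set.mem_setOf_eq, Set.mem_inter_iff]
              constructor
              · rintro ⟨h1, h2⟩; exact ⟨⟨le_of_eq h1, ge_of_eq h1⟩, h2⟩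
              · rintro ⟨⟨h1, h2⟩, h3⟩; exact ⟨le_antisymm h1 h2, h3⟩
            rw [this]
            exact (((convex_halfSpace_re_le y.re).inter (convex_halfSpace_re_ge y.re)).inter
              (convex_halfSpace_im_ge y.im)).isPreconnected
          · exact hW
      · push_neg at him
        set V : Set ℂ := {w : ℂ | w.re = y.re ∧ w.im ≤ y.im} with hVdef
        refine ⟨V ∪ W, ?_, ?_, ?_, ?_⟩
        · rintro w (hw | hw)
          · obtain ⟨h1, h2⟩ := hw
            exact hray y hy w h1 (by nlinarith)
          · exact hWsub hw
        · right; left; left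
          simp only [Set.mem_setOf_eq]; norm_num
        · left; exact ⟨rfl, le_refl _⟩
        · have him2 : (((y.re:ℝ):ℂ) + ((min y.im (-1) : ℝ):ℂ) * Complex.I).im = min y.im (-1) := by
            simp
          have hre2 : (((y.re:ℝ):ℂ) + ((min y.im (-1) : ℝ):ℂ) * Complex.I).re = y.re := by
            simp
          apply IsPreconnected.union (((y.re:ℝ):ℂ) + ((min y.im (-1) : ℝ):ℂ) * Complex.I)
          · exact ⟨hre2, by rw [him2]; exact min_le_left _ _⟩
          · right
            simp only [Set.mem_setOf_eq, him2]
            exact le_trans (min_le_right _ _) (by norm_num)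
          · have : V = ({w : ℂ | w.re ≤ y.re} ∩ {w : ℂ | y.re ≤ w.re}) ∩ {w : ℂ | w.im ≤ y.im} := by
              ext w
              simp only [hVdef, Set.mem_setOf_eq, Set.mem_inter_iff]
              constructor
              · rintro ⟨h1, h2⟩; exact ⟨⟨le_of_eq h1, ge_of_eq h1⟩, h2⟩
              · rintro ⟨⟨h1, h2⟩, h3⟩; exact ⟨le_antisymm h1 h2, h3⟩
            rw [this]
            exact (((convex_halfSpace_re_le y.re).inter (convex_halfSpace_re_ge y.re)).inter
              (convex_halfSpace_im_le y.im)).isPreconnected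
          · exact hW
  · -- continuous
    exact hφcont
  · -- differentiable
    intro z hz
    have hzK : z ∈ K := interior_subset hz
    rcases hzK with hzK | hzK
    · have hU : {w : ℂ | 1/4 < w.re} ∈ nhds z :=
        (isOpen_lt continuous_const Complex.continuous_re).mem_nhds
          (by simp only [Set.mem_setOf_eq]; linarith [hB1re z hzK])
      have heq : φ =ᶠ[nhdsWithin z (interior K)] (fun _ => (0:ℂ)) := by
        filter_upwards [nhdsWithin_le_nhds hU, self_mem_nhdsWithin] with w hw hwI
        rcases interior_subset hwI with hwK | hwK
        · exact if_neg (not_lt.mpr (by linarith [hB1re w hwK]))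
        · exact absurd (hB2re w hwK) (not_lt.mpr (le_of_lt hw))
      refine DifferentiableWithinAt.congr_of_eventuallyEq
        (differentiableWithinAt_const _) heq ?_
      exact if_neg (not_lt.mpr (by linarith [hB1re z hzK]))
    · have hU : {w : ℂ | w.re < 1/4} ∈ nhds z :=
        (isOpen_lt Complex.continuous_re continuous_const).mem_nhds
          (by simp only [Set.mem_setOf_eq]; exact hB2re z hzK)
      have heq : φ =ᶠ[nhdsWithin z (interior K)] (fun _ => (1:ℂ)) := by
        filter_upwards [nhdsWithin_le_nhds hU, self_mem_nhdsWithin] with w hw hwI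
        rcases interior_subset hwI with hwK | hwK
        · exact absurd hw (not_lt.mpr (by linarith [hB1re w hwK]))
        · exact if_pos (by linarith)
      refine DifferentiableWithinAt.congr_of_eventuallyEq
        (differentiableWithinAt_const _) heq ?_
      exact if_pos (by linarith [hB2re z hzK])
  · -- ε pos
    rw [hεdef]; positivity
  · -- main estimate
    intro n P hdeg hcoef
    by_contra hcon
    push_neg at hcon
    set m : ℕ := ⌊(n:ℝ)/τ⌋₊ with hmdef
    have hmn : m ≤ n := by
      have h1 : (n:ℝ)/τ ≤ (n:ℝ) := div_le_self (Nat.cast_nonneg n) (le_of_lt hτ)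
      calc m ≤ ⌊(n:ℝ)⌋₊ := Nat.floor_mono h1
        _ = n := Nat.floor_natCast n
    set s : ℕ := n - m with hsdef
    set S : ℝ := supNorm (fun z => P.eval z - φ z) K with hSdef
    have hSdef2 : S = sSup ((fun z => Complex.abs (P.eval z - φ z)) '' K) := rfl
    have hbdd : BddAbove ((fun z => Complex.abs (P.eval z - φ z)) '' K) := by
      apply IsCompact.bddAbove_image
        ((isCompact_closedBall _ _).union (isCompact_closedBall _ _))
      apply Complex.continuous_abs.comp_continuousOn
      exact ContinuousOn.sub (P.continuous_aeval.continuousOn) hφcont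
    have hb : ∀ z ∈ K, Complex.abs (P.eval z - φ z) ≤ S := by
      intro z hz
      rw [hSdef2]
      exact le_csSup hbdd ⟨z, hz, rfl⟩
    have hS0 : 0 ≤ S :=
      le_trans (Complex.abs.nonneg _) (hb _ hx₀K)
    obtain ⟨Q, hPQ⟩ : (Polynomial.X : Polynomial ℂ)^m ∣ P :=
      Polynomial.X_pow_dvd_iff.mpr hcoef
    have hQdeg : Q.natDegree ≤ s := by
      by_cases hQ0 : Q = 0
      · rw [hQ0, Polynomial.natDegree_zero]; exact Nat.zero_le _
      · have hX : ((Polynomial.X : Polynomial ℂ))^m ≠ 0 :=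
          pow_ne_zero _ Polynomial.X_ne_zero
        have h1 := Polynomial.natDegree_mul hX hQ0
        rw [← hPQ, Polynomial.natDegree_X_pow] at h1
        omega
    have heval : ∀ z : ℂ, P.eval z = z^m * Q.eval z := by
      intro z; rw [hPQ]; simp
    -- bound on circle
    have hQcirc : ∀ z : ℂ, Complex.abs (z - ((3/4:ℝ):ℂ)) = 1/4 →
        Complex.abs (Q.eval z) ≤ S * 2^m := by
      intro z hza
      have hzB : z ∈ B₁ := by
        rw [hB₁def, Metric.mem_closedBall, Complex.dist_eq, Complex.norm_eq_abs, hza]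
      have hre := hB1re z hzB
      have habsz : 1/2 ≤ Complex.abs z :=
        le_trans (by linarith [le_abs_self z.re]) (Complex.abs_re_le_abs z)
      have hφz : φ z = 0 := if_neg (not_lt.mpr (by linarith))
      have hP : Complex.abs (P.eval z) ≤ S := by
        have := hb z (Set.mem_union_left _ hzB)
        rwa [hφz, sub_zero] at this
      rw [heval z, map_mul, map_pow] at hP
      have h2 : (1/2:ℝ)^m * Complex.abs (Q.eval z) ≤
          Complex.abs z ^ m * Complex.abs (Q.eval z) :=
        mul_le_mul_of_nonneg_right (pow_le_pow_left₀ (by norm_num) habsz m)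
          (Complex.abs.nonneg _)
      calc Complex.abs (Q.eval z)
          = (2:ℝ)^m * ((1/2)^m * Complex.abs (Q.eval z)) := by
            rw [← mul_assoc, ← mul_pow]; norm_num
        _ ≤ (2:ℝ)^m * S :=
            mul_le_mul_of_nonneg_left (le_trans h2 hP) (by positivity)
        _ = S * 2^m := mul_comm _ _
    -- growth at x₀
    have hwdist : Complex.abs (((x₀:ℝ):ℂ) - ((3/4:ℝ):ℂ)) = 3/4 - x₀ := by
      rw [← Complex.ofReal_sub, Complex.abs_ofReal, abs_of_nonpos (by linarith)]
      ring
    have hgrow := poly_growth Q s hQdeg ((3/4:ℝ):ℂ) (1/4) (S*2^m) (by norm_num)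
      hQcirc ((x₀:ℝ):ℂ) (by rw [hwdist]; linarith)
    have hSm0 : 0 ≤ S * 2^m := by positivity
    have hQx : Complex.abs (Q.eval ((x₀:ℝ):ℂ)) ≤ S * 2^m * 4^s := by
      refine le_trans hgrow (mul_le_mul_of_nonneg_left ?_ hSm0)
      refine pow_le_pow_left₀ (by positivity) ?_ s
      rw [hwdist]
      linarith
    have hPx : Complex.abs (P.eval ((x₀:ℝ):ℂ)) ≤ S * (t^m * 4^s) := by
      rw [heval, map_mul, map_pow, Complex.abs_ofReal, abs_of_pos (by positivity)]
      calc x₀^m * Complex.abs (Q.eval ((x₀:ℝ):ℂ)) ≤ x₀^m * (S * 2^m * 4^s) :=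
            mul_le_mul_of_nonneg_left hQx (by positivity)
        _ = S * ((x₀*2)^m * 4^s) := by rw [mul_pow]; ring
        _ ≤ S * (t^m * 4^s) := by
            refine mul_le_mul_of_nonneg_left ?_ hS0
            refine mul_le_mul_of_nonneg_right
              (pow_le_pow_left₀ (by positivity) (by linarith) m) (by positivity)
    -- key exponent bound
    have hkey : t^m * (4:ℝ)^s ≤ C := by
      have e1 : t^m = (4:ℝ) ^ (-(τ+1) * (m:ℝ)) := by
        rw [htdef, ← Real.rpow_natCast ((4:ℝ) ^ (-(τ+1))) m, ← Real.rpow_mul (by norm_num)]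
      have e2 : ((4:ℝ))^s = (4:ℝ) ^ ((s:ℝ)) := by
        rw [Real.rpow_natCast]
      rw [e1, e2, ← Real.rpow_add h4, hCdef]
      apply Real.rpow_le_rpow_of_exponent_le (by norm_num)
      have hsn : (s:ℝ) = (n:ℝ) - (m:ℝ) := by
        rw [hsdef, Nat.cast_sub hmn]
      have hfl : (n:ℝ)/τ < (m:ℝ) + 1 := by
        rw [hmdef]
        exact Nat.lt_floor_add_one _
      have hτ0 : (0:ℝ) < τ := by linarith
      have hn : (n:ℝ) < τ * ((m:ℝ) + 1) := by
        rw [div_lt_iff₀ hτ0] at hfl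
        linarith
      have hm0 : (0:ℝ) ≤ (m:ℝ) := Nat.cast_nonneg m
      nlinarith
    -- conclusion
    have hφx : φ ((x₀:ℝ):ℂ) = 1 := by
      refine if_pos ?_
      rw [Complex.ofReal_re]
      linarith
    have h1 : Complex.abs (P.eval ((x₀:ℝ):ℂ) - 1) ≤ S := by
      have := hb _ hx₀K
      rwa [hφx] at this
    have h2 : (1:ℝ) ≤ Complex.abs (P.eval ((x₀:ℝ):ℂ) - 1) +
        Complex.abs (P.eval ((x₀:ℝ):ℂ)) := by
      have h3 := Complex.abs.add_le (1 - P.eval ((x₀:ℝ):ℂ)) (P.eval ((x₀:ℝ):ℂ))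
      simp only [sub_add_cancel, map_one] at h3
      rwa [← Complex.abs.map_neg (1 - _), neg_sub] at h3
    have h4' : Complex.abs (P.eval ((x₀:ℝ):ℂ)) ≤ S * C :=
      le_trans hPx (mul_le_mul_of_nonneg_left hkey hS0)
    have hSε : S < ε := hcon
    rw [hεdef] at hSε
    have hpos2 : (0:ℝ) < 2*(C+1) := by linarith
    have h5 : S * (2*(C+1)) < 1 := (lt_div_iff₀ hpos2).mp hSε
    nlinarith [h1, h2, h4', h5, hS0, hC0]
end
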